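/- arXiv:0802.4187 — 2 statements merged into one kernel-verified Lean document; each statement's English description precedes it below -/
import Mathlib

section
/- Let f ∈ Homeo₀(𝕋^d) with lift F, let K ⊆ 𝕋^d be a compact f-invariant set on which f is minimal, let v ∈ ℝ^d \ {0}, λ ∈ ℝ with ρ_K(F) ⊆ λv + {v}^⊥, and suppose the deviations parallel to v are not uniformly bounded on K, i.e. sup_{n∈ℕ, z∈K} |D_v(n,z)| = ∞. Then f restricted to K has sensitive dependence on initial conditions. -/
open Filter Topology Set
open scoped RealInnerProductSpace

noncomputable section

abbrev E (d : ℕ) : Type := EuclideanSpace ℝ (Fin d)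

/-- The integer lattice `ℤ^d` inside `ℝ^d`. -/
def intLattice (d : ℕ) : AddSubgroup (E d) where
  carrier := {x : E d | ∀ i, ∃ m : ℤ, x i = (m : ℝ)}
  zero_mem' := fun i => ⟨0, by simp⟩
  add_mem' := by
    intro a b ha hb i
    obtain ⟨m, hm⟩ := ha i
    obtain ⟨n, hn⟩ := hb i
    refine ⟨m + n, ?_⟩
    have h : (a + b) i = a i + b i := rfl
    rw [h, hm, hn]; push_cast; ring
  neg_mem' := by
    intro a ha i
    obtain ⟨m, hm⟩ := ha i
    refine ⟨-m, ?_⟩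
    have h : (-a) i = -(a i) := rfl
    rw [h, hm]; push_cast; ring

/-- The torus `𝕋^d = ℝ^d / ℤ^d`. -/
abbrev Torus (d : ℕ) : Type := E d ⧸ intLattice d

/-- The canonical projection `π : ℝ^d → 𝕋^d`. -/
def Tproj (d : ℕ) : E d → Torus d := QuotientAddGroup.mk

/-- `F` is a lift of `f`; together with `F` being a homeomorphism this encodes
`f ∈ Homeo₀(𝕋^d)` with lift `F`. -/
def IsLiftOf {d : ℕ} (F : E d ≃ₜ E d) (f : Torus d → Torus d) : Prop :=
  (∀ z : E d, Tproj d (F z) = f (Tproj d z)) ∧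
  (∀ z : E d, ∀ m ∈ intLattice d, F (z + m) = F z + m)

/-- The rotation set of `f` on `A ⊆ 𝕋^d`. -/
def rotSetOn {d : ℕ} (F : E d ≃ₜ E d) (A : Set (Torus d)) : Set (E d) :=
  {ρ | ∃ (n : ℕ → ℕ) (z : ℕ → E d), StrictMono n ∧ (∀ i, Tproj d (z i) ∈ A) ∧
      Tendsto (fun i => (n i : ℝ)⁻¹ • ((F : E d → E d)^[n i] (z i) - z i)) atTop (𝓝 ρ)}

/-- The rotation set `ρ(F)`. -/
def rotSet {d : ℕ} (F : E d ≃ₜ E d) : Set (E d) := rotSetOn F Set.univ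

/-- The deviation from the constant rotation, `D(n,z) = F^n(z) - z - nρ`. -/
def dev {d : ℕ} (F : E d ≃ₜ E d) (ρ : E d) (n : ℕ) (z : E d) : E d :=
  (F : E d → E d)^[n] z - z - (n : ℝ) • ρ

/-- The deviation parallel to `v`, `D_v(n,z) = ⟨F^n(z) - z - nρ, v⟩`. -/
def devIn {d : ℕ} (F : E d ≃ₜ E d) (ρ : E d) (v : E d) (n : ℕ) (z : E d) : ℝ :=
  ⟪dev F ρ n z, v⟫

/-- `1, ρ_1, …, ρ_d` are linearly independent over `ℚ`. -/
def TotallyIrrational {d : ℕ} (ρ : E d) : Prop :=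
  ∀ (k : Fin d → ℤ) (m : ℤ), (∑ i, (k i : ℝ) * ρ i) = (m : ℝ) → ∀ i, k i = 0

/-- `f` has bounded mean motion (w.r.t. the rotation vector `ρ`). -/
def BoundedMeanMotion {d : ℕ} (F : E d ≃ₜ E d) (ρ : E d) : Prop :=
  ∃ C : ℝ, ∀ (n : ℕ) (z : E d), ‖dev F ρ n z‖ ≤ C

/-- `f` is non-wandering: no nonempty open set is wandering. -/
def NonWandering {d : ℕ} (f : Torus d → Torus d) : Prop :=
  ∀ U : Set (Torus d), IsOpen U → U.Nonempty → ∃ n : ℕ, 0 < n ∧ (U ∩ f^[n] '' U).Nonempty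

/-- Projection of the deviation vector to the linear subspace `V`. -/
def devProj {d : ℕ} (F : E d ≃ₜ E d) (V : Submodule ℝ (E d)) (ρ : E d) (n : ℕ) (z : E d) : E d :=
  (V.orthogonalProjection (dev F ρ n z) : E d)

/-- The set of asymptotic directions `𝒜_V(z)`. -/
def asympDirs {d : ℕ} (F : E d ≃ₜ E d) (V : Submodule ℝ (E d)) (ρ : E d) (z : E d) :
    Set (E d) :=
  {v | ‖v‖ = 1 ∧ ∀ ε > (0 : ℝ), ∀ r > (0 : ℝ), ∃ n : ℕ,
      r < ‖devProj F V ρ n z‖ ∧ ‖(‖devProj F V ρ n z‖)⁻¹ • devProj F V ρ n z - v‖ < ε}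

/-- `S^+(v) = {w ∈ 𝕊^{d-1} : ⟨v,w⟩ > 0}`. -/
def Splus {d : ℕ} (v : E d) : Set (E d) := {w | ‖w‖ = 1 ∧ 0 < ⟪v, w⟫}

/-- `z` is `ε`-Lyapunov stable for `h`. -/
def LyapStable {X : Type*} [PseudoMetricSpace X] (h : X → X) (ε : ℝ) (z : X) : Prop :=
  ∃ δ > (0 : ℝ), ∀ n : ℕ, ∀ w, dist z w < δ → dist (h^[n] z) (h^[n] w) < ε

/-- `ε_f`, the largest `ε` such that `ε`-close points have `1/2`-close images. -/
def epsF {d : ℕ} (f : Torus d → Torus d) : ℝ :=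
  sSup {ε : ℝ | 0 < ε ∧ ∀ z z' : Torus d, dist z z' < ε → dist (f z) (f z') < 1 / 2}

/-- `ℤ`-indexed iterates of a homeomorphism. -/
def iterZ {d : ℕ} (F : E d ≃ₜ E d) : ℤ → E d → E d
  | .ofNat n => (F : E d → E d)^[n]
  | .negSucc n => (F.symm : E d → E d)^[n + 1]

/-- `ℤ`-indexed deviations parallel to `v`. -/
def devZIn {d : ℕ} (F : E d ≃ₜ E d) (ρ v : E d) (n : ℤ) (z : E d) : ℝ :=
  ⟪iterZ F n z - z - (n : ℝ) • ρ, v⟫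


/-! If `f|K` were not sensitive at scale `ε / 2`, for an `ε` so small that `F` moves `ε`-close
points less than `1 - ε` apart, some point of `K` would be `ε / 2`-Lyapunov stable. Minimality
spreads this stability over all of `K`: points of `K` that are close stay `ε`-close forever, and
then so do suitable lifts of them, since a lattice jump would need a displacement of length `1`.
Hence the deviations of close points of `K` differ by at most `2 ε ‖v‖`. Every orbit in `K` comes
back near any given point within a bounded time, so one large deviation `|D_v(n, x)|` is repeated
again and again along the orbit of `x`, and `D_v(m, x)` grows linearly in `m`. This contradicts
`ρ_K(F) ⊆ λv + {v}^⊥`, which makes `D_v(m, ·) / m` tend to `0` uniformly on `K`. -/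

section Torus

variable {d : ℕ}

lemma one_le_norm_of_mem_intLattice {x : E d} (hx : x ∈ intLattice d) (hx0 : x ≠ 0) :
    1 ≤ ‖x‖ := by
  obtain ⟨i, hi⟩ : ∃ i, x i ≠ 0 := by
    by_contra! h
    exact hx0 (by ext i; simpa using h i)
  obtain ⟨m, hm⟩ := hx i
  have hm0 : m ≠ 0 := by rintro rfl; simp [hm] at hi
  calc (1 : ℝ) ≤ |(m : ℝ)| := by exact_mod_cast Int.one_le_abs hm0
    _ = ‖x i‖ := by rw [hm, Real.norm_eq_abs]
    _ ≤ ‖x‖ := PiLp.norm_apply_le x i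

lemma eq_zero_of_mem_intLattice_of_norm_lt_one {x : E d} (hx : x ∈ intLattice d)
    (h : ‖x‖ < 1) : x = 0 := by
  by_contra hx0
  exact (one_le_norm_of_mem_intLattice hx hx0).not_gt h

lemma exists_mem_intLattice_norm_sub_le (x : E d) :
    ∃ m ∈ intLattice d, ‖x - m‖ ≤ √d := by
  refine ⟨WithLp.toLp 2 fun i => (⌊x i⌋ : ℝ), fun i => ⟨⌊x i⌋, rfl⟩, ?_⟩
  rw [EuclideanSpace.norm_eq]
  refine Real.sqrt_le_sqrt ?_
  have hfract : ∀ i, ‖x i - ⌊x i⌋‖ ^ 2 ≤ 1 := fun i => by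
    rw [Real.norm_eq_abs, sq_abs]
    nlinarith [Int.floor_le (x i), Int.lt_floor_add_one (x i)]
  simpa using Finset.sum_le_sum fun i (_ : i ∈ Finset.univ) => hfract i

lemma continuous_Tproj : Continuous (Tproj d) := continuous_quot_mk

lemma dist_Tproj_le (a b : E d) : dist (Tproj d a) (Tproj d b) ≤ dist a b := by
  rw [dist_eq_norm, dist_eq_norm, Tproj, ← QuotientAddGroup.mk_sub]
  exact QuotientAddGroup.norm_mk_le_norm

lemma uniformContinuous_Tproj : UniformContinuous (Tproj d) :=
  (LipschitzWith.of_dist_le_mul (K := 1) fun a b => by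
    simpa using dist_Tproj_le a b).uniformContinuous

lemma sub_mem_intLattice_of_Tproj_eq {a b : E d} (h : Tproj d a = Tproj d b) :
    b - a ∈ intLattice d := by
  rw [Tproj, QuotientAddGroup.eq] at h
  simpa [neg_add_eq_sub] using h

lemma exists_Tproj_eq_norm_sub_lt {a : E d} {w : Torus d} {r : ℝ} (h : dist (Tproj d a) w < r) :
    ∃ b, Tproj d b = w ∧ ‖a - b‖ < r := by
  obtain ⟨b, rfl⟩ := QuotientAddGroup.mk_surjective w
  rw [dist_eq_norm, Tproj, ← QuotientAddGroup.mk_sub, QuotientAddGroup.norm_lt_iff] at h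
  obtain ⟨u, hu, hur⟩ := h
  refine ⟨a - u, ?_, by simpa using hur⟩
  rw [Tproj, QuotientAddGroup.mk_sub, hu, QuotientAddGroup.mk_sub, sub_sub_cancel]

-- A lift of a short torus displacement differs from it by a lattice vector of norm `< 1`, i.e. `0`.
lemma norm_sub_lt_of_dist_Tproj_lt {x y : E d} {ε : ℝ} (hproj : dist (Tproj d x) (Tproj d y) < ε)
    (hxy : ‖x - y‖ < 1 - ε) : ‖x - y‖ < ε := by
  obtain ⟨y', hy', hxy'⟩ := exists_Tproj_eq_norm_sub_lt hproj
  have hlat : y - y' ∈ intLattice d := sub_mem_intLattice_of_Tproj_eq hy'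
  have hsmall : ‖y - y'‖ < 1 := by
    calc ‖y - y'‖ = ‖(x - y') - (x - y)‖ := by congr 1; abel
      _ ≤ ‖x - y'‖ + ‖x - y‖ := norm_sub_le _ _
      _ < 1 := by linarith
  rwa [sub_eq_zero.1 (eq_zero_of_mem_intLattice_of_norm_lt_one hlat hsmall)]

instance : CompactSpace (Torus d) := by
  refine ⟨?_⟩
  convert (isCompact_closedBall (0 : E d) √d).image (continuous_Tproj (d := d))
  refine (eq_univ_of_forall fun w => ?_).symm
  obtain ⟨x, rfl⟩ := QuotientAddGroup.mk_surjective w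
  obtain ⟨m, hm, hxm⟩ := exists_mem_intLattice_norm_sub_le x
  refine ⟨x - m, by simpa using hxm, ?_⟩
  rw [Tproj, QuotientAddGroup.eq]
  simpa using hm

lemma exists_continuous_comp_Tproj {Y : Type*} [TopologicalSpace Y] {h : E d → Y}
    (hh : Continuous h) (hper : ∀ z, ∀ m ∈ intLattice d, h (z + m) = h z) :
    ∃ g : Torus d → Y, Continuous g ∧ ∀ z, g (Tproj d z) = h z := by
  let := QuotientAddGroup.leftRel (intLattice d)
  have hrel : ∀ a b : E d, a ≈ b → h a = h b := fun a b hab => by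
    have hab' : -a + b ∈ intLattice d := QuotientAddGroup.leftRel_apply.1 hab
    simpa using (hper a _ hab').symm
  exact ⟨Quotient.lift h hrel, hh.quotient_lift hrel, fun _ => rfl⟩

end Torus

namespace IsLiftOf

variable {d : ℕ} {f : Torus d → Torus d} {F : E d ≃ₜ E d}

lemma Tproj_iterate (hlift : IsLiftOf F f) (n : ℕ) (z : E d) :
    Tproj d (F^[n] z) = f^[n] (Tproj d z) :=
  Function.Semiconj.iterate_right (f := Tproj d) hlift.1 n z

lemma iterate_add (hlift : IsLiftOf F f) (n : ℕ) (z : E d) {m : E d} (hm : m ∈ intLattice d) :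
    F^[n] (z + m) = F^[n] z + m :=
  (Function.Semiconj.iterate_right (f := (· + m)) (fun z => (hlift.2 z m hm).symm) n z).symm

protected lemma continuous (hlift : IsLiftOf F f) : Continuous f := by
  rw [(QuotientAddGroup.isQuotientMap_mk (intLattice d)).continuous_iff]
  have hcomm : f ∘ QuotientAddGroup.mk = Tproj d ∘ F := funext fun z => (hlift.1 z).symm
  rw [hcomm]
  exact continuous_Tproj.comp F.continuous

lemma exists_continuous_comp_Tproj_eq_sub (hlift : IsLiftOf F f) :
    ∃ g : Torus d → E d, Continuous g ∧ ∀ z, g (Tproj d z) = F z - z :=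
  exists_continuous_comp_Tproj (by fun_prop) fun z m hm => by
    rw [hlift.2 z m hm]
    abel

lemma exists_norm_sub_le (hlift : IsLiftOf F f) : ∃ C, ∀ z, ‖F z - z‖ ≤ C := by
  obtain ⟨g, hg, hgF⟩ := hlift.exists_continuous_comp_Tproj_eq_sub
  obtain ⟨C, hC⟩ := (isCompact_range hg).isBounded.exists_norm_le
  exact ⟨C, fun z => hgF z ▸ hC _ ⟨_, rfl⟩⟩

protected lemma uniformContinuous (hlift : IsLiftOf F f) : UniformContinuous F := by
  obtain ⟨g, hg, hgF⟩ := hlift.exists_continuous_comp_Tproj_eq_sub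
  have hF : (F : E d → E d) = fun z => g (Tproj d z) + z := funext fun z => by simp [hgF]
  rw [hF]
  exact ((CompactSpace.uniformContinuous_of_continuous hg).comp uniformContinuous_Tproj).add
    uniformContinuous_id

lemma exists_pos_norm_map_sub_lt (hlift : IsLiftOf F f) :
    ∃ ε > 0, ∀ x y : E d, ‖x - y‖ < ε → ‖F x - F y‖ < 1 - ε := by
  obtain ⟨δ, hδ, hFδ⟩ :=
    Metric.uniformContinuous_iff.1 hlift.uniformContinuous (1 / 2) one_half_pos
  refine ⟨min δ (1 / 2), by positivity, fun x y hxy => ?_⟩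
  have hxy' : dist x y < δ := by rw [dist_eq_norm]; exact hxy.trans_le (min_le_left _ _)
  have := hFδ hxy'
  rw [dist_eq_norm] at this
  linarith [min_le_right δ (1 / 2)]

lemma norm_iterate_sub_lt (hlift : IsLiftOf F f) {ε : ℝ}
    (hF : ∀ x y : E d, ‖x - y‖ < ε → ‖F x - F y‖ < 1 - ε) {a b : E d} (hab : ‖a - b‖ < ε)
    (horbit : ∀ n, dist (f^[n] (Tproj d a)) (f^[n] (Tproj d b)) < ε) (n : ℕ) :
    ‖F^[n] a - F^[n] b‖ < ε := by
  induction n with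
  | zero => exact hab
  | succ n ih =>
    refine norm_sub_lt_of_dist_Tproj_lt ?_ ?_
    · rw [hlift.Tproj_iterate, hlift.Tproj_iterate]
      exact horbit (n + 1)
    · rw [Function.iterate_succ_apply', Function.iterate_succ_apply']
      exact hF _ _ ih

lemma devIn_congr (hlift : IsLiftOf F f) (ρ v : E d) (n : ℕ) {z z' : E d}
    (h : Tproj d z = Tproj d z') : devIn F ρ v n z = devIn F ρ v n z' := by
  have hz' : z' = z + (z' - z) := by abel
  have hF : F^[n] z' = F^[n] z + (z' - z) := by
    rw [hz', hlift.iterate_add n z (sub_mem_intLattice_of_Tproj_eq h), ← hz']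
  simp only [devIn, dev, hF]
  congr 1
  abel

end IsLiftOf

section Deviation

variable {d : ℕ} {F : E d ≃ₜ E d}

@[simp]
lemma devIn_zero (ρ v z : E d) : devIn F ρ v 0 z = 0 := by
  simp [devIn, dev]

lemma devIn_add (ρ v : E d) (m n : ℕ) (z : E d) :
    devIn F ρ v (m + n) z = devIn F ρ v m z + devIn F ρ v n (F^[m] z) := by
  simp only [devIn, dev, ← inner_add_left, add_comm m n, Function.iterate_add_apply]
  push_cast
  congr 1
  rw [add_smul]
  abel

lemma norm_iterate_sub_le {C : ℝ} (hC : ∀ z, ‖F z - z‖ ≤ C) (n : ℕ) (z : E d) :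
    ‖F^[n] z - z‖ ≤ n * C := by
  have := dist_le_range_sum_of_dist_le (f := fun k => F^[k] z) n (d := fun _ => C)
    fun {k} _ => by rw [dist_comm, dist_eq_norm, Function.iterate_succ_apply']; exact hC _
  simpa [dist_eq_norm, norm_sub_rev] using this

lemma abs_devIn_le {C : ℝ} (hC : ∀ z, ‖F z - z‖ ≤ C) (ρ v : E d) (n : ℕ) (z : E d) :
    |devIn F ρ v n z| ≤ n * (C + ‖ρ‖) * ‖v‖ := by
  refine (abs_real_inner_le_norm _ _).trans (mul_le_mul_of_nonneg_right ?_ (norm_nonneg v))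
  calc ‖F^[n] z - z - (n : ℝ) • ρ‖ ≤ ‖F^[n] z - z‖ + ‖(n : ℝ) • ρ‖ := norm_sub_le _ _
    _ ≤ n * C + n * ‖ρ‖ := by
      rw [norm_smul, Real.norm_natCast]
      exact add_le_add_left (norm_iterate_sub_le hC n z) _
    _ = n * (C + ‖ρ‖) := by ring

lemma abs_devIn_sub_le (ρ v : E d) (n : ℕ) (a b : E d) :
    |devIn F ρ v n a - devIn F ρ v n b| ≤ (‖F^[n] a - F^[n] b‖ + ‖a - b‖) * ‖v‖ := by
  rw [devIn, devIn, ← inner_sub_left]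
  refine (abs_real_inner_le_norm _ _).trans (mul_le_mul_of_nonneg_right ?_ (norm_nonneg v))
  calc ‖dev F ρ n a - dev F ρ n b‖ = ‖(F^[n] a - F^[n] b) - (a - b)‖ := by
        simp only [dev]; congr 1; abel
    _ ≤ ‖F^[n] a - F^[n] b‖ + ‖a - b‖ := norm_sub_le _ _

lemma inner_smul_iterate_sub_sub (ρ v : E d) {n : ℕ} (hn : n ≠ 0) (z : E d) :
    ⟪(n : ℝ)⁻¹ • (F^[n] z - z) - ρ, v⟫ = (n : ℝ)⁻¹ * devIn F ρ v n z := by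
  have hn' : (n : ℝ) ≠ 0 := Nat.cast_ne_zero.2 hn
  rw [devIn, dev, ← real_inner_smul_left, smul_sub (n : ℝ)⁻¹ _ ((n : ℝ) • ρ), smul_smul,
    inv_mul_cancel₀ hn', one_smul]

-- Limits of `(F^n(z) - z) / n` over `z ∈ K` lie in `ρ_K(F)`, where the `v`-component is pinned.
lemma eventually_abs_devIn_le_mul {K : Set (Torus d)} {ρ v : E d}
    (hrot : ∀ ρ' ∈ rotSetOn F K, ⟪ρ' - ρ, v⟫ = 0) {C : ℝ} (hC : ∀ z, ‖F z - z‖ ≤ C)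
    {η : ℝ} (hη : 0 < η) :
    ∀ᶠ n in atTop, ∀ z, Tproj d z ∈ K → |devIn F ρ v n z| ≤ η * n := by
  by_contra h
  obtain ⟨φ, hφ, hbig⟩ := extraction_of_frequently_atTop (not_eventually.1 h)
  push Not at hbig
  choose z hzK hz using hbig
  have hφ0 : ∀ i, φ i ≠ 0 := fun i hi => by simpa [hi] using hz i
  set u : ℕ → E d := fun i => (φ i : ℝ)⁻¹ • (F^[φ i] (z i) - z i)
  have hu : ∀ i, u i ∈ Metric.closedBall 0 C := fun i => by
    have hpos : (0 : ℝ) < φ i := Nat.cast_pos.2 (Nat.pos_of_ne_zero (hφ0 i))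
    rw [mem_closedBall_zero_iff, norm_smul, norm_inv, Real.norm_natCast, inv_mul_le_iff₀ hpos]
    exact norm_iterate_sub_le hC _ _
  obtain ⟨ρ', -, ψ, hψ, hlim⟩ := tendsto_subseq_of_bounded Metric.isBounded_closedBall hu
  have hρ' : ρ' ∈ rotSetOn F K := ⟨φ ∘ ψ, z ∘ ψ, hφ.comp hψ, fun i => hzK _, hlim⟩
  have hlarge : ∀ i, η ≤ |⟪u (ψ i) - ρ, v⟫| := fun i => by
    have hpos : (0 : ℝ) < φ (ψ i) := Nat.cast_pos.2 (Nat.pos_of_ne_zero (hφ0 _))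
    rw [inner_smul_iterate_sub_sub ρ v (hφ0 _), abs_mul, abs_inv, Nat.abs_cast,
      le_inv_mul_iff₀ hpos, mul_comm]
    exact (hz _).le
  have := ge_of_tendsto' ((hlim.sub_const ρ).inner tendsto_const_nhds).abs hlarge
  rw [hrot ρ' hρ', abs_zero] at this
  exact hη.not_ge this

end Deviation

section MinimalDynamics

variable {X : Type*} [PseudoMetricSpace X] {f : X → X} {K : Set X}

lemma exists_uniform_return_time (hf : Continuous f) (hK : IsCompact K)
    (hmin : ∀ z ∈ K, K ⊆ closure (range fun n : ℕ => f^[n] z)) {r : ℝ} (hr : 0 < r) :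
    ∃ N : ℕ, ∀ w ∈ K, ∀ p ∈ K, ∃ s ≤ N, dist (f^[s] w) p < r := by
  have hopen : ∀ s : ℕ, IsOpen {q : X × X | dist (f^[s] q.1) q.2 < r} := fun s =>
    isOpen_lt (((hf.iterate s).comp continuous_fst).dist continuous_snd) continuous_const
  have hcover : K ×ˢ K ⊆ ⋃ s : ℕ, {q : X × X | dist (f^[s] q.1) q.2 < r} := by
    rintro ⟨w, p⟩ ⟨hw, hp⟩
    obtain ⟨_, ⟨s, rfl⟩, hs⟩ := Metric.mem_closure_iff.1 (hmin w hw hp) r hr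
    exact mem_iUnion.2 ⟨s, by rwa [dist_comm] at hs⟩
  obtain ⟨t, ht⟩ := (hK.prod hK).elim_finite_subcover _ hopen hcover
  refine ⟨t.sup id, fun w hw p hp => ?_⟩
  obtain ⟨s, hs, hsr⟩ := mem_iUnion₂.1 (ht (mk_mem_prod hw hp))
  exact ⟨s, Finset.le_sup (f := id) hs, hsr⟩

lemma exists_forall_le_dist_iterate_lt (hf : Continuous f) (hK : IsCompact K) (N : ℕ) {ε : ℝ}
    (hε : 0 < ε) :
    ∃ δ > 0, ∀ w ∈ K, ∀ w' ∈ K, dist w w' < δ → ∀ s ≤ N, dist (f^[s] w) (f^[s] w') < ε := by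
  have hcont : Continuous fun w (s : Fin (N + 1)) => f^[s] w :=
    continuous_pi fun s => hf.iterate s
  obtain ⟨δ, hδ, hδε⟩ :=
    Metric.uniformContinuousOn_iff.1 (hK.uniformContinuousOn_of_continuous hcont.continuousOn) ε hε
  refine ⟨δ, hδ, fun w hw w' hw' hww s hs => ?_⟩
  exact (dist_le_pi_dist _ _ (⟨s, Nat.lt_succ_of_le hs⟩ : Fin (N + 1))).trans_lt
    (hδε w hw w' hw' hww)

-- Close points of `K` enter the stability ball of `z₀` together within a bounded time.
lemma exists_forall_dist_iterate_lt_of_stable (hf : Continuous f) (hK : IsCompact K)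
    (hKf : MapsTo f K K) (hmin : ∀ z ∈ K, K ⊆ closure (range fun n : ℕ => f^[n] z))
    {z₀ : X} (hz₀ : z₀ ∈ K) {ε δ₀ : ℝ} (hδ₀ : 0 < δ₀)
    (hstable : ∀ w ∈ K, dist z₀ w < δ₀ → ∀ n, dist (f^[n] z₀) (f^[n] w) < ε / 2) :
    ∃ δ > 0, ∀ w ∈ K, ∀ w' ∈ K, dist w w' < δ → ∀ n, dist (f^[n] w) (f^[n] w') < ε := by
  have hε : 0 < ε := by simpa using hstable z₀ hz₀ (by simpa using hδ₀) 0
  obtain ⟨N, hN⟩ := exists_uniform_return_time hf hK hmin (half_pos hδ₀)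
  obtain ⟨δ, hδ, hδN⟩ := exists_forall_le_dist_iterate_lt hf hK N (lt_min (half_pos hδ₀) hε)
  refine ⟨δ, hδ, fun w hw w' hw' hww n => ?_⟩
  obtain ⟨s, hsN, hs⟩ := hN w hw z₀ hz₀
  have hss := hδN w hw w' hw' hww
  rcases le_or_gt n s with hns | hsn
  · exact (hss n (hns.trans hsN)).trans_le (min_le_right _ _)
  obtain ⟨k, rfl⟩ := Nat.exists_eq_add_of_le' hsn.le
  have hs' : dist z₀ (f^[s] w') < δ₀ := by
    calc dist z₀ (f^[s] w') ≤ dist z₀ (f^[s] w) + dist (f^[s] w) (f^[s] w') := dist_triangle _ _ _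
      _ < δ₀ / 2 + δ₀ / 2 := by
        rw [dist_comm]
        exact add_lt_add hs ((hss s hsN).trans_le (min_le_left _ _))
      _ = δ₀ := add_halves δ₀
  have h₁ := hstable _ (hKf.iterate s hw) (by rw [dist_comm]; linarith) k
  have h₂ := hstable _ (hKf.iterate s hw') hs' k
  rw [Function.iterate_add_apply, Function.iterate_add_apply]
  calc dist (f^[k] (f^[s] w)) (f^[k] (f^[s] w'))
      ≤ dist (f^[k] z₀) (f^[k] (f^[s] w)) + dist (f^[k] z₀) (f^[k] (f^[s] w')) :=
        dist_triangle_left _ _ _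
    _ < ε / 2 + ε / 2 := add_lt_add h₁ h₂
    _ = ε := add_halves ε

end MinimalDynamics

lemma frequently_mul_le_mul_sub_of_gain {u : ℕ → ℝ} {n N : ℕ} {a : ℝ} (hn : 0 < n) (ha : 0 ≤ a)
    (hgain : ∀ m, ∃ s ≤ N, u m + a ≤ u (m + s + n)) :
    ∃ᶠ m in atTop, a * m ≤ (n + N) * (u m - u 0) := by
  have hsteps : ∀ k : ℕ, ∃ m, k ≤ m ∧ m ≤ k * (n + N) ∧ u 0 + k * a ≤ u m := by
    intro k
    induction k with
    | zero => exact ⟨0, le_rfl, Nat.zero_le _, by simp⟩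
    | succ k ih =>
      obtain ⟨m, hkm, hm, hum⟩ := ih
      obtain ⟨s, hsN, hs⟩ := hgain m
      refine ⟨m + s + n, by omega, by nlinarith, ?_⟩
      push_cast
      linarith
  refine frequently_atTop.2 fun k => ?_
  obtain ⟨m, hkm, hm, hum⟩ := hsteps k
  refine ⟨m, hkm, ?_⟩
  have hm' : (m : ℝ) ≤ k * (n + N) := by exact_mod_cast hm
  nlinarith

namespace IsLiftOf

variable {d : ℕ} {f : Torus d → Torus d} {F : E d ≃ₜ E d} {K : Set (Torus d)}

lemma abs_devIn_sub_le_of_dist_lt (hlift : IsLiftOf F f) {ε δ : ℝ}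
    (hF : ∀ x y : E d, ‖x - y‖ < ε → ‖F x - F y‖ < 1 - ε)
    (hequi : ∀ w ∈ K, ∀ w' ∈ K, dist w w' < δ → ∀ n, dist (f^[n] w) (f^[n] w') < ε)
    {a b : E d} (ha : Tproj d a ∈ K) (hb : Tproj d b ∈ K)
    (hab : dist (Tproj d a) (Tproj d b) < δ) (ρ v : E d) (n : ℕ) :
    |devIn F ρ v n a - devIn F ρ v n b| ≤ 2 * ε * ‖v‖ := by
  have horbit := hequi _ ha _ hb hab
  obtain ⟨b', hb', hab'⟩ := exists_Tproj_eq_norm_sub_lt (by simpa using horbit 0)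
  rw [← hb'] at horbit
  rw [hlift.devIn_congr ρ v n hb'.symm]
  calc |devIn F ρ v n a - devIn F ρ v n b'| ≤ (‖F^[n] a - F^[n] b'‖ + ‖a - b'‖) * ‖v‖ :=
        abs_devIn_sub_le ρ v n a b'
    _ ≤ (ε + ε) * ‖v‖ := by
        gcongr
        exact (hlift.norm_iterate_sub_lt hF hab' horbit n).le
    _ = 2 * ε * ‖v‖ := by ring

lemma exists_abs_devIn_add_sub_le (hlift : IsLiftOf F f) (hKf : MapsTo f K K) {ε δ : ℝ}
    (hF : ∀ x y : E d, ‖x - y‖ < ε → ‖F x - F y‖ < 1 - ε)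
    (hequi : ∀ w ∈ K, ∀ w' ∈ K, dist w w' < δ → ∀ n, dist (f^[n] w) (f^[n] w') < ε)
    {N : ℕ} (hN : ∀ w ∈ K, ∀ p ∈ K, ∃ s ≤ N, dist (f^[s] w) p < δ)
    {C : ℝ} (hC : ∀ z, ‖F z - z‖ ≤ C) (ρ v : E d) {x : E d} (hx : Tproj d x ∈ K) (n m : ℕ) :
    ∃ s ≤ N, |devIn F ρ v (m + s + n) x - devIn F ρ v m x - devIn F ρ v n x| ≤
      N * (C + ‖ρ‖) * ‖v‖ + 2 * ε * ‖v‖ := by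
  obtain ⟨s, hsN, hs⟩ := hN _ (hKf.iterate m hx) _ hx
  refine ⟨s, hsN, ?_⟩
  have hret : Tproj d (F^[m + s] x) ∈ K ∧ dist (Tproj d (F^[m + s] x)) (Tproj d x) < δ := by
    rw [hlift.Tproj_iterate, add_comm, Function.iterate_add_apply]
    exact ⟨hKf.iterate s (hKf.iterate m hx), hs⟩
  have hC0 : 0 ≤ C := (norm_nonneg _).trans (hC 0)
  have hshort : |devIn F ρ v s (F^[m] x)| ≤ N * (C + ‖ρ‖) * ‖v‖ :=
    (abs_devIn_le hC ρ v s _).trans (by gcongr)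
  have hclose := hlift.abs_devIn_sub_le_of_dist_lt hF hequi hret.1 hx hret.2 ρ v n
  have hsplit : devIn F ρ v (m + s + n) x - devIn F ρ v m x - devIn F ρ v n x =
      devIn F ρ v s (F^[m] x) + (devIn F ρ v n (F^[m + s] x) - devIn F ρ v n x) := by
    rw [devIn_add, devIn_add]
    ring
  rw [hsplit]
  exact (abs_add_le _ _).trans (add_le_add hshort hclose)

theorem exists_abs_devIn_le_of_equicontinuous (hlift : IsLiftOf F f) (hKc : IsCompact K)
    (hKf : MapsTo f K K) (hmin : ∀ z ∈ K, K ⊆ closure (range fun n : ℕ => f^[n] z))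
    {ρ v : E d} (hrot : ∀ ρ' ∈ rotSetOn F K, ⟪ρ' - ρ, v⟫ = 0) {ε δ : ℝ} (hε : 0 < ε)
    (hδ : 0 < δ) (hF : ∀ x y : E d, ‖x - y‖ < ε → ‖F x - F y‖ < 1 - ε)
    (hequi : ∀ w ∈ K, ∀ w' ∈ K, dist w w' < δ → ∀ n, dist (f^[n] w) (f^[n] w') < ε) :
    ∃ B, ∀ n z, Tproj d z ∈ K → |devIn F ρ v n z| ≤ B := by
  obtain ⟨C, hC⟩ := hlift.exists_norm_sub_le
  have hC0 : 0 ≤ C := (norm_nonneg _).trans (hC 0)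
  obtain ⟨N, hN⟩ := exists_uniform_return_time hlift.continuous hKc hmin hδ
  set M := N * (C + ‖ρ‖) * ‖v‖ + 2 * ε * ‖v‖
  have hM : 0 ≤ M := by positivity
  refine ⟨M + 1, fun n x hx => le_of_not_gt fun hbig => ?_⟩
  set D : ℕ → ℝ := fun m => devIn F ρ v m x
  have hn : 0 < n := Nat.pos_of_ne_zero fun hn => by simp [hn] at hbig; linarith
  obtain ⟨σ, hσ, hσn⟩ : ∃ σ : ℝ, |σ| = 1 ∧ σ * D n = |D n| := by
    rcases le_total 0 (D n) with h | h
    · exact ⟨1, abs_one, by rw [one_mul, abs_of_nonneg h]⟩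
    · exact ⟨-1, by norm_num, by rw [abs_of_nonpos h]; ring⟩
  have habsσ : ∀ r, |σ * r| = |r| := fun r => by rw [abs_mul, hσ, one_mul]
  -- In each window `σ D` gains at least `|D n| - M > 1`.
  have hgain : ∀ m, ∃ s ≤ N, σ * D m + 1 ≤ σ * D (m + s + n) := fun m => by
    obtain ⟨s, hsN, hs⟩ := hlift.exists_abs_devIn_add_sub_le hKf hF hequi hN hC ρ v hx n m
    have hlow := neg_abs_le (σ * (D (m + s + n) - D m - D n))
    rw [habsσ] at hlow
    exact ⟨s, hsN, by nlinarith⟩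
  have hsub := eventually_abs_devIn_le_mul hrot hC (η := 1 / (2 * (n + N))) (by positivity)
  obtain ⟨m, hgrow, hsmall, hm⟩ := ((frequently_mul_le_mul_sub_of_gain hn zero_le_one
    hgain).and_eventually (hsub.and (eventually_ge_atTop 1))).exists
  have hσm : σ * D m ≤ 1 / (2 * (n + N)) * m :=
    (habsσ (D m) ▸ le_abs_self (σ * D m)).trans (hsmall x hx)
  have hD0 : D 0 = 0 := devIn_zero ρ v x
  have hnN : (0 : ℝ) < n + N := by positivity
  have hhalf : (n + N) * (1 / (2 * (n + N)) * m) = (m : ℝ) / 2 := by field_simp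
  have hm1 : (1 : ℝ) ≤ m := by exact_mod_cast hm
  rw [hD0, mul_zero, sub_zero] at hgrow
  nlinarith [mul_le_mul_of_nonneg_left hσm hnN.le]

end IsLiftOf

theorem sensitiveDependence_of_minimal_unbounded_devIn_general {d : ℕ} (f : Torus d → Torus d)
    (F : E d ≃ₜ E d) (hlift : IsLiftOf F f) (K : Set (Torus d)) (hKc : IsCompact K)
    (hKinv : f '' K = K)
    (hmin : ∀ z ∈ K, K ⊆ closure (Set.range fun n : ℕ => f^[n] z))
    (v : E d) (lam : ℝ)
    (hrot : ∀ ρ' ∈ rotSetOn F K, ⟪ρ' - lam • v, v⟫ = 0)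
    (hunb : ∀ C : ℝ, ∃ (n : ℕ) (z : E d), Tproj d z ∈ K ∧ C < |devIn F (lam • v) v n z|) :
    ∃ ε > (0 : ℝ), ∀ z ∈ K, ∀ δ > (0 : ℝ), ∃ z' ∈ K, dist z z' < δ ∧
      ∃ n : ℕ, ε ≤ dist (f^[n] z) (f^[n] z') := by
  obtain ⟨ε, hε, hF⟩ := hlift.exists_pos_norm_map_sub_lt
  have hKf : MapsTo f K K := mapsTo_iff_image_subset.2 hKinv.subset
  refine ⟨ε / 2, half_pos hε, ?_⟩
  by_contra! hstable
  obtain ⟨z₀, hz₀, δ₀, hδ₀, hz₀stable⟩ := hstable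
  obtain ⟨δ, hδ, hequi⟩ :=
    exists_forall_dist_iterate_lt_of_stable hlift.continuous hKc hKf hmin hz₀ hδ₀ hz₀stable
  obtain ⟨B, hB⟩ :=
    hlift.exists_abs_devIn_le_of_equicontinuous hKc hKf hmin hrot hε hδ hF hequi
  obtain ⟨n, z, hz, hlt⟩ := hunb B
  exact (hB n z hz).not_gt hlt

/-- **Corollary (sensitive dependence).** If `f|K` is minimal, `ρ_K(F) ⊆ λv + {v}^⊥` and
the deviations parallel to `v` are not uniformly bounded on `K`, then `f|K` has
sensitive dependence on initial conditions. -/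
theorem sensitiveDependence_of_minimal_unbounded_devIn {d : ℕ} (f : Torus d → Torus d)
    (F : E d ≃ₜ E d) (hlift : IsLiftOf F f) (K : Set (Torus d)) (hKc : IsCompact K)
    (hKne : K.Nonempty) (hKinv : f '' K = K)
    (hmin : ∀ z ∈ K, K ⊆ closure (Set.range fun n : ℕ => f^[n] z))
    (v : E d) (hv : v ≠ 0) (lam : ℝ)
    (hrot : ∀ ρ' ∈ rotSetOn F K, ⟪ρ' - lam • v, v⟫ = 0)
    (hunb : ∀ C : ℝ, ∃ (n : ℕ) (z : E d), Tproj d z ∈ K ∧ C < |devIn F (lam • v) v n z|) :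
    ∃ ε > (0 : ℝ), ∀ z ∈ K, ∀ δ > (0 : ℝ), ∃ z' ∈ K, dist z z' < δ ∧
      ∃ n : ℕ, ε ≤ dist (f^[n] z) (f^[n] z') :=
  sensitiveDependence_of_minimal_unbounded_devIn_general f F hlift K hKc hKinv hmin v lam hrot hunb
end
end

section
/- Let f ∈ Homeo₀(𝕋^d) with lift F, let K ⊆ 𝕋^d be a compact f-invariant set, let V ⊆ ℝ^d be a linear subspace with ρ_K(F) ⊆ v₀ + V^⊥ for some v₀ ∈ V, and let v ∈ 𝕊^{d−1}. Then ℛ_V(v) = {z ∈ K : v ∈ 𝒜_V(z)} is an f-invariant G_δ subset of K; in particular, if ℛ_V(v) contains a point whose forward orbit is dense in K, then ℛ_V(v) is a residual subset of K. -/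
open Filter Topology Set
open scoped RealInnerProductSpace

noncomputable section

/-- The set `ℛ_V(v) = {z ∈ K : v ∈ 𝒜_V(z)}` (defined via lifts). -/
def Rset {d : ℕ} (F : E d ≃ₜ E d) (V : Submodule ℝ (E d)) (v₀ : E d)
    (K : Set (Torus d)) (v : E d) : Set (Torus d) :=
  {z ∈ K | ∀ zl : E d, Tproj d zl = z → v ∈ asympDirs F V v₀ zl}

/-! Changing the lift of a point by a lattice vector does not change `D_V(n, ·)`, so each
`D_V(n, ·)` descends to a continuous map on the torus. Having `v` as an asymptotic direction means
that for all `k, j : ℕ` some `D_V(n, z)` lies in the open cone of vectors of norm `> j + 1` whose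
direction is `1 / (k + 1)`-close to `v`; this is a countable intersection of countable unions of
open sets. Invariance comes from the cocycle identity `D_V(n, F z) = D_V(n + 1, z) - D_V(1, z)`:
shifting time and subtracting a fixed vector does not change asymptotic directions. A forward
invariant set containing a point whose orbit is dense in `K` is dense in `K`. -/

section Directions

variable {X : Type*} [NormedAddCommGroup X] [NormedSpace ℝ X]

theorem norm_inv_norm_smul_sub_inv_norm_smul_le {a : X} (ha : a ≠ 0) (b : X) :
    ‖‖a‖⁻¹ • a - ‖b‖⁻¹ • b‖ ≤ 2 * ‖a - b‖ / ‖a‖ := by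
  have ha' : 0 < ‖a‖ := norm_pos_iff.2 ha
  have hsplit : ‖a‖⁻¹ • a - ‖b‖⁻¹ • b = ‖a‖⁻¹ • ((a - b) + (1 - ‖a‖ * ‖b‖⁻¹) • b) := by
    rw [smul_add, smul_smul, mul_sub, mul_one, ← mul_assoc, inv_mul_cancel₀ ha'.ne', one_mul,
      sub_smul, smul_sub]
    abel
  have hb : ‖(1 - ‖a‖ * ‖b‖⁻¹) • b‖ ≤ ‖a - b‖ := by
    rcases eq_or_ne b 0 with rfl | hb0
    · simp
    have hb' : 0 < ‖b‖ := norm_pos_iff.2 hb0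
    calc ‖(1 - ‖a‖ * ‖b‖⁻¹) • b‖ = |(1 - ‖a‖ * ‖b‖⁻¹) * ‖b‖| := by
          rw [norm_smul, Real.norm_eq_abs, abs_mul, abs_of_pos hb']
      _ = |‖a‖ - ‖b‖| := by rw [abs_sub_comm]; congr 1; field_simp
      _ ≤ ‖a - b‖ := abs_norm_sub_norm_le a b
  rw [hsplit, norm_smul, norm_inv, norm_norm, inv_mul_eq_div]
  gcongr
  linarith [norm_add_le (a - b) ((1 - ‖a‖ * ‖b‖⁻¹) • b)]

def dirCone (v : X) (ε r : ℝ) : Set X :=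
  {x | r < ‖x‖ ∧ ‖‖x‖⁻¹ • x - v‖ < ε}

theorem dirCone_mono {v : X} {ε ε' r r' : ℝ} (hε : ε ≤ ε') (hr : r' ≤ r) :
    dirCone v ε r ⊆ dirCone v ε' r' :=
  fun _ ⟨hx, hxv⟩ => ⟨hr.trans_lt hx, hxv.trans_le hε⟩

theorem isOpen_dirCone (v : X) (ε : ℝ) {r : ℝ} (hr : 0 ≤ r) : IsOpen (dirCone v ε r) := by
  have hcont : ContinuousOn (fun x : X => ‖‖x‖⁻¹ • x - v‖) {x | r < ‖x‖} :=
    ((continuous_norm.continuousOn.inv₀ fun x hx => (hr.trans_lt hx).ne').smul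
      continuousOn_id |>.sub continuousOn_const).norm
  exact hcont.isOpen_inter_preimage (isOpen_lt continuous_const continuous_norm) isOpen_Iio

theorem exists_sub_mem_dirCone (v c : X) {ε : ℝ} (hε : 0 < ε) (r : ℝ) :
    ∃ R, ∀ x ∈ dirCone v (ε / 2) R, x - c ∈ dirCone v ε r := by
  refine ⟨‖c‖ + max r (4 * ‖c‖ / ε), fun x ⟨hx, hxv⟩ => ?_⟩
  have hxc : max r (4 * ‖c‖ / ε) < ‖x - c‖ := by linarith [norm_sub_norm_le x c]
  have hpos : 0 < ‖x - c‖ := lt_of_le_of_lt (by positivity) hxc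
  have hsmall : 2 * ‖c‖ / ‖x - c‖ < ε / 2 := by
    rw [div_lt_iff₀ hpos]
    have := (div_lt_iff₀ hε).1 ((le_max_right _ _).trans_lt hxc)
    linarith
  refine ⟨(le_max_left _ _).trans_lt hxc, ?_⟩
  calc ‖‖x - c‖⁻¹ • (x - c) - v‖
      ≤ ‖‖x - c‖⁻¹ • (x - c) - ‖x‖⁻¹ • x‖ + ‖‖x‖⁻¹ • x - v‖ :=
        norm_sub_le_norm_sub_add_norm_sub _ _ _
    _ < ε / 2 + ε / 2 := by
        refine add_lt_add_of_le_of_lt ?_ hxv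
        have := norm_inv_norm_smul_sub_inv_norm_smul_le (norm_pos_iff.1 hpos) x
        rw [sub_sub_cancel_left, norm_neg] at this
        linarith
    _ = ε := add_halves ε

def IsAsympDir (u : ℕ → X) (v : X) : Prop :=
  ∀ ε > (0 : ℝ), ∀ r > (0 : ℝ), ∃ n, u n ∈ dirCone v ε r

theorem isAsympDir_iff_forall_nat {u : ℕ → X} {v : X} :
    IsAsympDir u v ↔ ∀ k j : ℕ, ∃ n, u n ∈ dirCone v (1 / (k + 1)) (j + 1) := by
  refine ⟨fun h k j => h _ Nat.one_div_pos_of_nat _ j.cast_add_one_pos, fun h ε hε r _ => ?_⟩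
  obtain ⟨k, hk⟩ := exists_nat_one_div_lt hε
  obtain ⟨j, hj⟩ := exists_nat_gt r
  obtain ⟨n, hn⟩ := h k j
  exact ⟨n, dirCone_mono hk.le (by linarith) hn⟩

theorem IsAsympDir.succ_sub {u : ℕ → X} {v : X} (h : IsAsympDir u v) (c : X) :
    IsAsympDir (fun n => u (n + 1) - c) v := by
  intro ε hε r _
  obtain ⟨R, hR⟩ := exists_sub_mem_dirCone v c hε r
  obtain ⟨n, hn⟩ := h (ε / 2) (half_pos hε) (max R ‖u 0‖ + 1) (by positivity)
  obtain ⟨k, rfl⟩ : ∃ k, n = k + 1 := Nat.exists_eq_succ_of_ne_zero <| by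
    rintro rfl
    linarith [hn.1, le_max_right R ‖u 0‖]
  exact ⟨k, hR _ (dirCone_mono le_rfl (by linarith [le_max_left R ‖u 0‖]) hn)⟩

theorem isGδ_setOf_isAsympDir {Y : Type*} [TopologicalSpace Y] {g : ℕ → Y → X}
    (hg : ∀ n, Continuous (g n)) (v : X) : IsGδ {y | IsAsympDir (fun n => g n y) v} := by
  simp only [isAsympDir_iff_forall_nat, ofPred_forall]
  refine .iInter fun k => .iInter fun j => IsOpen.isGδ ?_
  simp only [ofPred_exists]
  exact isOpen_iUnion fun n => (isOpen_dirCone v _ (by positivity)).preimage (hg n)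

end Directions

section Torus

variable {d : ℕ} {F : E d ≃ₜ E d} {f : Torus d → Torus d}

theorem Tproj_surjective (d : ℕ) : Function.Surjective (Tproj d) :=
  QuotientAddGroup.mk_surjective

theorem iterate_add_of_mem_intLattice (hlift : IsLiftOf F f) (n : ℕ) (z : E d) {m : E d}
    (hm : m ∈ intLattice d) : (F : E d → E d)^[n] (z + m) = (F : E d → E d)^[n] z + m := by
  induction n with
  | zero => rfl
  | succ k ih => rw [Function.iterate_succ_apply', Function.iterate_succ_apply', ih, hlift.2 _ m hm]

theorem devProj_eq_of_Tproj_eq (hlift : IsLiftOf F f) (V : Submodule ℝ (E d)) (ρ : E d)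
    (n : ℕ) {a b : E d} (h : Tproj d a = Tproj d b) : devProj F V ρ n a = devProj F V ρ n b := by
  obtain ⟨m, hm, rfl⟩ : ∃ m ∈ intLattice d, b = a + m :=
    ⟨-a + b, QuotientAddGroup.eq.1 h, by abel⟩
  simp only [devProj, dev, iterate_add_of_mem_intLattice hlift n a hm, add_sub_add_right_eq_sub]

theorem dev_apply_eq_succ_sub (ρ : E d) (n : ℕ) (z : E d) :
    dev F ρ n (F z) = dev F ρ (n + 1) z - dev F ρ 1 z := by
  rw [dev, dev, dev, Function.iterate_succ_apply, Function.iterate_one]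
  push_cast
  module

theorem devProj_apply_eq_succ_sub (V : Submodule ℝ (E d)) (ρ : E d) (n : ℕ) (z : E d) :
    devProj F V ρ n (F z) = devProj F V ρ (n + 1) z - devProj F V ρ 1 z := by
  simp only [devProj, dev_apply_eq_succ_sub, map_sub, Submodule.coe_sub]

theorem continuous_devProj (F : E d ≃ₜ E d) (V : Submodule ℝ (E d)) (ρ : E d) (n : ℕ) :
    Continuous (devProj F V ρ n) := by
  unfold devProj dev
  fun_prop

theorem mem_asympDirs_iff {V : Submodule ℝ (E d)} {ρ z v : E d} :
    v ∈ asympDirs F V ρ z ↔ ‖v‖ = 1 ∧ IsAsympDir (devProj F V ρ · z) v :=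
  Iff.rfl

theorem asympDirs_subset_asympDirs_apply (V : Submodule ℝ (E d)) (ρ z : E d) :
    asympDirs F V ρ z ⊆ asympDirs F V ρ (F z) := by
  intro v hv
  obtain ⟨hv, h⟩ := mem_asympDirs_iff.1 hv
  refine mem_asympDirs_iff.2 ⟨hv, ?_⟩
  simp only [devProj_apply_eq_succ_sub]
  exact h.succ_sub (devProj F V ρ 1 z)

theorem Tproj_mem_Rset_iff (hlift : IsLiftOf F f) {V : Submodule ℝ (E d)} {ρ : E d}
    {K : Set (Torus d)} {v : E d} (z : E d) :
    Tproj d z ∈ Rset F V ρ K v ↔ Tproj d z ∈ K ∧ v ∈ asympDirs F V ρ z := by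
  refine and_congr_right fun _ => ⟨fun h => h z rfl, fun h w hw => ?_⟩
  simpa only [asympDirs, devProj_eq_of_Tproj_eq hlift V ρ _ hw] using h

theorem mapsTo_Rset (hlift : IsLiftOf F f) {K : Set (Torus d)} (hK : MapsTo f K K)
    (V : Submodule ℝ (E d)) (ρ v : E d) : MapsTo f (Rset F V ρ K v) (Rset F V ρ K v) := by
  intro z hz
  obtain ⟨z, rfl⟩ := Tproj_surjective d z
  rw [Tproj_mem_Rset_iff hlift] at hz
  rw [← hlift.1, Tproj_mem_Rset_iff hlift, hlift.1]
  exact ⟨hK hz.1, asympDirs_subset_asympDirs_apply V ρ z hz.2⟩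

theorem exists_continuous_comp_Tproj_eq_devProj (hlift : IsLiftOf F f) (V : Submodule ℝ (E d))
    (ρ : E d) (n : ℕ) :
    ∃ g : Torus d → E d, Continuous g ∧ ∀ z, g (Tproj d z) = devProj F V ρ n z :=
  ⟨fun z => Quotient.liftOn' z (devProj F V ρ n)
      fun _ _ h => devProj_eq_of_Tproj_eq hlift V ρ n (Quotient.sound' h),
    (continuous_devProj F V ρ n).quotient_liftOn' _, fun _ => rfl⟩

theorem exists_isGδ_Rset_eq_inter (hlift : IsLiftOf F f) (K : Set (Torus d))
    (V : Submodule ℝ (E d)) (ρ : E d) {v : E d} (hv : ‖v‖ = 1) :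
    ∃ T : Set (Torus d), IsGδ T ∧ Rset F V ρ K v = T ∩ K := by
  choose g hg hgD using exists_continuous_comp_Tproj_eq_devProj hlift V ρ
  refine ⟨{z | IsAsympDir (fun n => g n z) v}, isGδ_setOf_isAsympDir hg v, ?_⟩
  ext z
  obtain ⟨z, rfl⟩ := Tproj_surjective d z
  rw [Tproj_mem_Rset_iff hlift, mem_asympDirs_iff]
  simp only [hgD, hv, true_and, mem_inter_iff, mem_ofPred_eq, and_comm]

end Torus

theorem Rset_invariant_Gdelta_residual_general {d : ℕ} (f : Torus d → Torus d)
    (F : E d ≃ₜ E d) (hlift : IsLiftOf F f) (K : Set (Torus d))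
    (hKinv : f '' K = K) (V : Submodule ℝ (E d)) (v₀ : E d)
    (v : E d) (hv : ‖v‖ = 1) :
    (∀ z ∈ Rset F V v₀ K v, f z ∈ Rset F V v₀ K v) ∧
    (∃ T : Set (Torus d), IsGδ T ∧ Rset F V v₀ K v = T ∩ K) ∧
    ((∃ z ∈ Rset F V v₀ K v, K ⊆ closure (Set.range fun n : ℕ => f^[n] z)) →
      K ⊆ closure (Rset F V v₀ K v)) := by
  have hinv := mapsTo_Rset hlift (mapsTo_iff_image_subset.2 hKinv.subset) V v₀ v
  refine ⟨hinv, exists_isGδ_Rset_eq_inter hlift K V v₀ hv, ?_⟩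
  rintro ⟨z, hz, hdense⟩
  exact hdense.trans (closure_mono (range_subset_iff.2 fun n => hinv.iterate n hz))

/-- **Lemma (asymptotic directions, (d)).** `ℛ_V(v)` is an `f`-invariant `G_δ` subset of
`K`; in particular, if it contains a point with dense forward orbit in `K`, then it is
residual in `K` (being a dense `G_δ` subset of `K`). -/
theorem Rset_invariant_Gdelta_residual {d : ℕ} (f : Torus d → Torus d)
    (F : E d ≃ₜ E d) (hlift : IsLiftOf F f) (K : Set (Torus d)) (hKc : IsCompact K)
    (hKinv : f '' K = K) (V : Submodule ℝ (E d)) (v₀ : E d) (hv₀ : v₀ ∈ V)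
    (hrot : ∀ ρ' ∈ rotSetOn F K, ρ' - v₀ ∈ Vᗮ)
    (v : E d) (hv : ‖v‖ = 1) :
    (∀ z ∈ Rset F V v₀ K v, f z ∈ Rset F V v₀ K v) ∧
    (∃ T : Set (Torus d), IsGδ T ∧ Rset F V v₀ K v = T ∩ K) ∧
    ((∃ z ∈ Rset F V v₀ K v, K ⊆ closure (Set.range fun n : ℕ => f^[n] z)) →
      K ⊆ closure (Rset F V v₀ K v)) :=
  Rset_invariant_Gdelta_residual_general f F hlift K hKinv V v₀ v hv

end
end
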